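/- arXiv:2402.09072 — 2 statements merged into one kernel-verified Lean document; each statement's English description precedes it below -/
import Mathlib

section
/- The tensor inner product ⟨A, B⟩ = Σ_{i,j,k} A_{ijk} B_{ijk} of two real third-order tensors A, B ∈ ℝ^{n₁×n₂×n₃} equals Trace(A ⋆ Bᵀ) and also equals Trace(Aᵀ ⋆ B). -/
open Matrix Complex Finset Kronecker

abbrev Tensor (n₁ n₂ n₃ : ℕ) := Fin n₃ → Matrix (Fin n₁) (Fin n₂) ℝ

/-- The DFT along the third (tube) mode: the `i`-th Fourier frontal slice `Â⁽ⁱ⁾`. -/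
noncomputable def dftSlice {n₁ n₂ n₃ : ℕ} (A : Tensor n₁ n₂ n₃) (i : Fin n₃) :
    Matrix (Fin n₁) (Fin n₂) ℂ :=
  ∑ k : Fin n₃,
    Complex.exp (-2 * Real.pi * Complex.I * ((i : ℕ) : ℂ) * ((k : ℕ) : ℂ) / (n₃ : ℂ)) •
      (A k).map Complex.ofReal

/-- The t-product `A ⋆ B = fold (bcirc A · unfold B)`, i.e. circular convolution of
frontal slices. -/
noncomputable def tProd {n₁ q n₂ n₃ : ℕ} (A : Tensor n₁ q n₃) (B : Tensor q n₂ n₃) :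
    Tensor n₁ n₂ n₃ :=
  fun k => ∑ m : Fin n₃, A m * B (k - m)

/-- Tensor transpose: transpose each frontal slice and reverse the order of slices 2..n₃. -/
def tTranspose {n₁ n₂ n₃ : ℕ} (A : Tensor n₁ n₂ n₃) : Tensor n₂ n₁ n₃ :=
  fun k => (A (-k)).transpose

/-- Identity tensor: first frontal slice is the identity matrix, the rest are zero. -/
def tId (n n₃ : ℕ) [NeZero n₃] : Tensor n n n₃ := fun k => if k = 0 then 1 else 0

/-- Tensor trace `(1/n₃) Σᵢ trace Â⁽ⁱ⁾` (complex-valued form). -/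
noncomputable def tTraceC {n n₃ : ℕ} (A : Tensor n n n₃) : ℂ :=
  (n₃ : ℂ)⁻¹ * ∑ i : Fin n₃, (dftSlice A i).trace

/-- Tensor trace (real value). -/
noncomputable def tTraceR {n n₃ : ℕ} (A : Tensor n n n₃) : ℝ := (tTraceC A).re

/-- Squared Frobenius norm of a third-order tensor. -/
def frobSq {n₁ n₂ n₃ : ℕ} (A : Tensor n₁ n₂ n₃) : ℝ :=
  ∑ k : Fin n₃, ∑ p, ∑ q, (A k p q) ^ 2


/-- Tensor inner product `⟨A,B⟩ = Σ_{i,j,k} A_{ijk} B_{ijk}`. -/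
def tInner {n₁ n₂ n₃ : ℕ} (A B : Tensor n₁ n₂ n₃) : ℝ :=
  ∑ k : Fin n₃, ∑ p, ∑ q, A k p q * B k p q

/-!
The tensor trace only sees the first frontal slice: averaging the DFT over all frequencies
kills every slice but slice `0`, by orthogonality of the `n₃`-th roots of unity. The first
slice of `A ⋆ Bᵀ` is `∑ₖ A⁽ᵏ⁾ B⁽ᵏ⁾ᵀ`, whose trace is `⟨A, B⟩`. The identity for `Aᵀ ⋆ B` follows
by applying this to `Aᵀ, Bᵀ`, since transposition is an involution preserving `⟨·,·⟩`.
-/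

lemma sum_exp_neg_two_pi_I_mul_div {n : ℕ} [NeZero n] (k : Fin n) :
    ∑ i : Fin n, exp (-2 * Real.pi * I * (i : ℕ) * (k : ℕ) / n) = if k = 0 then (n : ℂ) else 0 := by
  have hterm (i : Fin n) : exp (-2 * Real.pi * I * (i : ℕ) * (k : ℕ) / n) =
      ((exp (2 * Real.pi * I / n))⁻¹ ^ (k : ℕ)) ^ (i : ℕ) := by
    rw [← pow_mul, ← exp_neg, ← exp_nat_mul]
    push_cast
    ring_nf
  have hζ := (isPrimitiveRoot_exp n (NeZero.ne n)).inv
  generalize (exp (2 * Real.pi * I / n))⁻¹ = ζ at hterm hζ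
  set x := ζ ^ (k : ℕ)
  simp only [hterm, Fin.sum_univ_eq_sum_range (x ^ ·)]
  split_ifs with hk
  · simp [x, hk]
  · have hx : x ≠ 1 := hζ.pow_ne_one_of_pos_of_lt (Fin.val_ne_zero_iff.mpr hk) k.isLt
    have hxn : x ^ n = 1 := by rw [← pow_mul, mul_comm, pow_mul, hζ.pow_eq_one, one_pow]
    rw [geom_sum_eq hx, hxn, sub_self, zero_div]

lemma trace_map_ofReal {n : Type*} [Fintype n] (M : Matrix n n ℝ) :
    (M.map ofReal).trace = M.trace :=
  (AddMonoidHom.map_trace ofRealHom M).symm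

lemma tTraceC_eq_trace_zero {n n₃ : ℕ} [NeZero n₃] (X : Tensor n n n₃) :
    tTraceC X = (X 0).trace := by
  simp only [tTraceC, dftSlice, trace_sum, trace_smul, smul_eq_mul, trace_map_ofReal]
  rw [Finset.sum_comm]
  simp only [← Finset.sum_mul, sum_exp_neg_two_pi_I_mul_div, ite_mul, zero_mul, Finset.sum_ite_eq',
    Finset.mem_univ, if_true]
  field_simp [NeZero.ne]

lemma tInner_eq_sum_trace {n₁ n₂ n₃ : ℕ} (A B : Tensor n₁ n₂ n₃) :
    tInner A B = ∑ k, (A k * (B k)ᵀ).trace := by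
  simp only [tInner, ← sum_hadamard_eq, hadamard_apply]

lemma tProd_tTranspose_zero {n₁ n₂ n₃ : ℕ} [NeZero n₃] (A B : Tensor n₁ n₂ n₃) :
    tProd A (tTranspose B) 0 = ∑ m, A m * (B m)ᵀ := by
  simp only [tProd, tTranspose, zero_sub, neg_neg]

lemma tTraceC_tProd_tTranspose {n₁ n₂ n₃ : ℕ} (A B : Tensor n₁ n₂ n₃) :
    tTraceC (tProd A (tTranspose B)) = tInner A B := by
  obtain rfl | _ := eq_zero_or_neZero n₃
  · simp [tTraceC, tInner]
  · rw [tTraceC_eq_trace_zero, tProd_tTranspose_zero, trace_sum, tInner_eq_sum_trace]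

lemma tTranspose_tTranspose {n₁ n₂ n₃ : ℕ} (A : Tensor n₁ n₂ n₃) :
    tTranspose (tTranspose A) = A := by
  funext k
  simp only [tTranspose, neg_neg, transpose_transpose]

lemma tInner_tTranspose {n₁ n₂ n₃ : ℕ} (A B : Tensor n₁ n₂ n₃) :
    tInner (tTranspose A) (tTranspose B) = tInner A B := by
  simp only [tInner, tTranspose, transpose_apply]
  refine (Equiv.sum_comp (Equiv.neg (Fin n₃)) fun k => ∑ q, ∑ p, A k p q * B k p q).trans ?_
  exact sum_congr rfl fun _ _ => sum_comm

/-- `⟨A,B⟩ = Trace (A ⋆ Bᵀ) = Trace (Aᵀ ⋆ B)`. -/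
theorem tInner_eq_tTrace {n₁ n₂ n₃ : ℕ} (A B : Tensor n₁ n₂ n₃) :
    ((tInner A B : ℝ) : ℂ) = tTraceC (tProd A (tTranspose B)) ∧
      ((tInner A B : ℝ) : ℂ) = tTraceC (tProd (tTranspose A) B) := by
  refine ⟨(tTraceC_tProd_tTranspose A B).symm, ?_⟩
  rw [← tInner_tTranspose, ← tTraceC_tProd_tTranspose, tTranspose_tTranspose]
end

section
/- Let A, B ∈ ℝ^{n×n×n₃} with A f-symmetric and B f-symmetric positive definite, and let ρ* be the maximum of the trace ratio ρ(V) = Trace(Vᵀ⋆A⋆V)/Trace(Vᵀ⋆B⋆V) over f-orthogonal V ∈ ℝ^{n×d×n₃}. Then the function f(ρ) = max_{Vᵀ⋆V=I_d} Trace(Vᵀ⋆(A − ρB)⋆V) satisfies f(ρ*) = 0. -/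
open Matrix Complex Finset Kronecker ComplexOrder

/-!
The DFT along the third mode turns the t-product into slicewise matrix products and the
transpose into the conjugate transpose, so the Fourier slices of `Vᵀ ⋆ B ⋆ V` are
`V̂ᵢᴴ B̂ᵢ V̂ᵢ` with `V̂ᵢᴴ V̂ᵢ = I`. These are positive definite, hence
`b(V) = Trace(Vᵀ ⋆ B ⋆ V) > 0` (when `d > 0`). With `a(V) = Trace(Vᵀ ⋆ A ⋆ V)`, the
maximality `a(V) / b(V) ≤ ρ*` becomes `a(V) - ρ* b(V) ≤ 0`, with equality at `V*`, and by
bilinearity of `⋆` and linearity of the trace, `a(V) - ρ* b(V) = Trace(Vᵀ ⋆ (A - ρ* B) ⋆ V)`.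
-/

noncomputable def dftRoot (n₃ : ℕ) : ℂ := exp (-2 * Real.pi * I / n₃)

section Fourier

variable {n₃ : ℕ}

lemma norm_dftRoot : ‖dftRoot n₃‖ = 1 := by
  rw [dftRoot, Complex.norm_exp]
  simp

lemma dftRoot_pow_self [NeZero n₃] : dftRoot n₃ ^ n₃ = 1 := by
  rw [dftRoot, ← exp_nat_mul, mul_div_cancel₀ _ (Nat.cast_ne_zero.mpr (NeZero.ne n₃)),
    neg_mul, neg_mul, exp_neg, exp_two_pi_mul_I, inv_one]

lemma dftRoot_pow_mul_val_add [NeZero n₃] (m : ℕ) (a b : Fin n₃) :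
    dftRoot n₃ ^ (m * (a + b : Fin n₃)) = dftRoot n₃ ^ (m * a) * dftRoot n₃ ^ (m * b) := by
  rw [← pow_add, ← mul_add, pow_eq_pow_mod _ dftRoot_pow_self,
    pow_eq_pow_mod (m * (a + b)) dftRoot_pow_self, Fin.val_add, Nat.mul_mod, Nat.mod_mod,
    ← Nat.mul_mod]

lemma star_dftRoot_pow_mul_val [NeZero n₃] (m : ℕ) (k : Fin n₃) :
    star (dftRoot n₃ ^ (m * k)) = dftRoot n₃ ^ (m * (-k : Fin n₃)) := by
  have hunit : star (dftRoot n₃ ^ (m * k)) * dftRoot n₃ ^ (m * k) = 1 := by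
    rw [star_def, conj_mul', norm_pow, norm_dftRoot]; simp
  have hinv : dftRoot n₃ ^ (m * (-k : Fin n₃)) * dftRoot n₃ ^ (m * k) = 1 := by
    rw [← dftRoot_pow_mul_val_add, neg_add_cancel]; simp
  exact mul_right_cancel₀ (right_ne_zero_of_mul_eq_one hunit) (hunit.trans hinv.symm)

lemma dftSlice_eq_sum_pow {n₁ n₂ : ℕ} (A : Tensor n₁ n₂ n₃) (i : Fin n₃) :
    dftSlice A i = ∑ k : Fin n₃, dftRoot n₃ ^ ((i : ℕ) * k) • (A k).map ofReal := by
  refine sum_congr rfl fun k _ => ?_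
  rw [dftRoot, ← exp_nat_mul]
  congr 2
  push_cast
  ring

lemma map_ofReal_tProd {n₁ q n₂ : ℕ} (A : Tensor n₁ q n₃) (B : Tensor q n₂ n₃) (k : Fin n₃) :
    (tProd A B k).map ofReal = ∑ m, (A m).map ofReal * (B (k - m)).map ofReal := by
  ext p r
  simp [tProd, Matrix.sum_apply, Matrix.mul_apply]

variable [NeZero n₃]

lemma dftSlice_tProd {n₁ q n₂ : ℕ} (A : Tensor n₁ q n₃) (B : Tensor q n₂ n₃) (i : Fin n₃) :
    dftSlice (tProd A B) i = dftSlice A i * dftSlice B i := by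
  simp only [dftSlice_eq_sum_pow, map_ofReal_tProd, Matrix.sum_mul, Matrix.mul_sum,
    Matrix.smul_mul, Matrix.mul_smul, smul_smul, smul_sum]
  rw [sum_comm]
  conv_rhs => rw [sum_comm]
  refine sum_congr rfl fun m _ => Fintype.sum_equiv (Equiv.subRight m) _ _ fun k => ?_
  simp [← dftRoot_pow_mul_val_add]

lemma dftSlice_tTranspose {n₁ n₂ : ℕ} (A : Tensor n₁ n₂ n₃) (i : Fin n₃) :
    dftSlice (tTranspose A) i = (dftSlice A i)ᴴ := by
  simp only [dftSlice_eq_sum_pow, tTranspose, conjTranspose_sum, conjTranspose_smul,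
    star_dftRoot_pow_mul_val]
  refine Fintype.sum_equiv (Equiv.neg (Fin n₃)) _ _ fun k => ?_
  ext p r
  simp

lemma dftSlice_tId (d : ℕ) (i : Fin n₃) : dftSlice (tId d n₃) i = 1 := by
  rw [dftSlice_eq_sum_pow, sum_eq_single 0 (fun k _ hk => by simp [tId, hk]) (by simp)]
  simp [tId]

end Fourier

section Linearity

variable {n₃ : ℕ}

lemma dftSlice_sub {n₁ n₂ : ℕ} (A B : Tensor n₁ n₂ n₃) (i : Fin n₃) :
    dftSlice (A - B) i = dftSlice A i - dftSlice B i := by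
  ext p r
  simp [dftSlice, Matrix.sum_apply, mul_sub]

lemma dftSlice_smul {n₁ n₂ : ℕ} (c : ℝ) (A : Tensor n₁ n₂ n₃) (i : Fin n₃) :
    dftSlice (c • A) i = (c : ℂ) • dftSlice A i := by
  ext p r
  simp [dftSlice, Matrix.sum_apply, mul_sum, mul_left_comm]

lemma tTraceR_sub {n : ℕ} (A B : Tensor n n n₃) : tTraceR (A - B) = tTraceR A - tTraceR B := by
  simp [tTraceR, tTraceC, dftSlice_sub, sum_sub_distrib, mul_sub]

lemma tTraceR_smul {n : ℕ} (c : ℝ) (A : Tensor n n n₃) : tTraceR (c • A) = c * tTraceR A := by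
  simp [tTraceR, tTraceC, dftSlice_smul, ← mul_sum, mul_left_comm]

lemma tProd_sub_left {n₁ q n₂ : ℕ} (A B : Tensor n₁ q n₃) (C : Tensor q n₂ n₃) :
    tProd (A - B) C = tProd A C - tProd B C := by
  ext k : 1
  simp [tProd, Matrix.sub_mul, sum_sub_distrib]

lemma tProd_sub_right {n₁ q n₂ : ℕ} (A : Tensor n₁ q n₃) (B C : Tensor q n₂ n₃) :
    tProd A (B - C) = tProd A B - tProd A C := by
  ext k : 1
  simp [tProd, Matrix.mul_sub, sum_sub_distrib]

lemma tProd_smul_left {n₁ q n₂ : ℕ} (c : ℝ) (A : Tensor n₁ q n₃) (B : Tensor q n₂ n₃) :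
    tProd (c • A) B = c • tProd A B := by
  ext k : 1
  simp [tProd, smul_sum]

lemma tProd_smul_right {n₁ q n₂ : ℕ} (c : ℝ) (A : Tensor n₁ q n₃) (B : Tensor q n₂ n₃) :
    tProd A (c • B) = c • tProd A B := by
  ext k : 1
  simp [tProd, smul_sum]

end Linearity

lemma Matrix.mulVec_injective_of_mul_eq_one {m n R : Type*} [Fintype m] [Fintype n]
    [DecidableEq n] [Semiring R] {A : Matrix m n R} {B : Matrix n m R} (h : B * A = 1) :
    Function.Injective A.mulVec :=
  Function.LeftInverse.injective (g := B.mulVec) fun x => by rw [mulVec_mulVec, h, one_mulVec]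

lemma tTraceR_eq_zero_of_size_zero {n₃ : ℕ} (A : Tensor 0 0 n₃) : tTraceR A = 0 := by
  simp [tTraceR, tTraceC, Matrix.trace]

section Orthogonal

variable {n d n₃ : ℕ} [NeZero n₃]

lemma conjTranspose_mul_self_dftSlice {V : Tensor n d n₃}
    (hV : tProd (tTranspose V) V = tId d n₃) (i : Fin n₃) :
    (dftSlice V i)ᴴ * dftSlice V i = 1 := by
  simpa [dftSlice_tProd, dftSlice_tTranspose, dftSlice_tId] using congrArg (dftSlice · i) hV

lemma tTraceR_conj_pos_of_posDef (hd : 0 < d) {B : Tensor n n n₃}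
    (hB : ∀ i, (dftSlice B i).PosDef) {V : Tensor n d n₃}
    (hV : tProd (tTranspose V) V = tId d n₃) :
    0 < tTraceR (tProd (tProd (tTranspose V) B) V) := by
  have : Nonempty (Fin d) := Fin.pos_iff_nonempty.mp hd
  have hslice (i : Fin n₃) : 0 < (dftSlice (tProd (tProd (tTranspose V) B) V) i).trace := by
    rw [dftSlice_tProd, dftSlice_tProd, dftSlice_tTranspose]
    exact ((hB i).conjTranspose_mul_mul_same
      (mulVec_injective_of_mul_eq_one (conjTranspose_mul_self_dftSlice hV i))).trace_pos
  have hC : 0 < tTraceC (tProd (tProd (tTranspose V) B) V) :=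
    mul_pos (inv_pos.mpr (Nat.cast_pos.mpr (Nat.pos_of_neZero n₃)))
      (sum_pos (fun i _ => hslice i) univ_nonempty)
  exact (Complex.lt_def.mp hC).1

end Orthogonal

lemma isGreatest_sub_mul_of_forall_div_le {ι : Type*} {p : ι → Prop} {a b : ι → ℝ}
    (hb : ∀ v, p v → 0 < b v) {x : ι} (hx : p x) (hmax : ∀ v, p v → a v / b v ≤ a x / b x) :
    IsGreatest {t | ∃ v, p v ∧ t = a v - a x / b x * b v} 0 := by
  refine ⟨⟨x, hx, by rw [div_mul_cancel₀ _ (hb x hx).ne', sub_self]⟩, ?_⟩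
  rintro t ⟨v, hv, rfl⟩
  have := (div_le_iff₀ (hb v hv)).mp (hmax v hv)
  linarith

theorem f_at_max_ratio_eq_zero_general {n d n₃ : ℕ} [NeZero n₃] (A B : Tensor n n n₃)
    (hBpd : ∀ i : Fin n₃, (dftSlice B i).PosDef)
    (Vstar : Tensor n d n₃) (hVstar : tProd (tTranspose Vstar) Vstar = tId d n₃)
    (hmax : ∀ V : Tensor n d n₃, tProd (tTranspose V) V = tId d n₃ →
      tTraceR (tProd (tProd (tTranspose V) A) V) /
          tTraceR (tProd (tProd (tTranspose V) B) V) ≤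
        tTraceR (tProd (tProd (tTranspose Vstar) A) Vstar) /
          tTraceR (tProd (tProd (tTranspose Vstar) B) Vstar))
    (ρstar : ℝ)
    (hρ : ρstar = tTraceR (tProd (tProd (tTranspose Vstar) A) Vstar) /
      tTraceR (tProd (tProd (tTranspose Vstar) B) Vstar)) :
    IsGreatest
      {t : ℝ | ∃ V : Tensor n d n₃, tProd (tTranspose V) V = tId d n₃ ∧
        t = tTraceR (tProd (tProd (tTranspose V) (A - ρstar • B)) V)}
      0 := by
  obtain rfl | hd := Nat.eq_zero_or_pos d
  · simp only [tTraceR_eq_zero_of_size_zero]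
    exact ⟨⟨Vstar, hVstar, rfl⟩, fun t ⟨_, _, ht⟩ => ht.le⟩
  subst hρ
  simpa only [tProd_sub_right, tProd_smul_right, tProd_sub_left, tProd_smul_left, tTraceR_sub,
    tTraceR_smul] using isGreatest_sub_mul_of_forall_div_le
      (p := fun V => tProd (tTranspose V) V = tId d n₃)
      (a := fun V => tTraceR (tProd (tProd (tTranspose V) A) V))
      (b := fun V => tTraceR (tProd (tProd (tTranspose V) B) V))
      (fun V hV => tTraceR_conj_pos_of_posDef hd hBpd hV) hVstar hmax

/-- If `ρ*` is the maximal value of the trace ratio, then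
`f(ρ*) = max_{Vᵀ⋆V = I_d} Trace (Vᵀ⋆(A - ρ*B)⋆V) = 0`. -/
theorem f_at_max_ratio_eq_zero {n d n₃ : ℕ} [NeZero n₃] (A B : Tensor n n n₃)
    (hA : tTranspose A = A) (hB : tTranspose B = B)
    (hBpd : ∀ i : Fin n₃, (dftSlice B i).PosDef)
    (Vstar : Tensor n d n₃) (hVstar : tProd (tTranspose Vstar) Vstar = tId d n₃)
    (hmax : ∀ V : Tensor n d n₃, tProd (tTranspose V) V = tId d n₃ →
      tTraceR (tProd (tProd (tTranspose V) A) V) /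
          tTraceR (tProd (tProd (tTranspose V) B) V) ≤
        tTraceR (tProd (tProd (tTranspose Vstar) A) Vstar) /
          tTraceR (tProd (tProd (tTranspose Vstar) B) Vstar))
    (ρstar : ℝ)
    (hρ : ρstar = tTraceR (tProd (tProd (tTranspose Vstar) A) Vstar) /
      tTraceR (tProd (tProd (tTranspose Vstar) B) Vstar)) :
    IsGreatest
      {t : ℝ | ∃ V : Tensor n d n₃, tProd (tTranspose V) V = tId d n₃ ∧
        t = tTraceR (tProd (tProd (tTranspose V) (A - ρstar • B)) V)}
      0 :=
  f_at_max_ratio_eq_zero_general A B hBpd Vstar hVstar hmax ρstar hρ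
end
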